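/- Let (A,·,r) be a quasitriangular anti-flexible bialgebra with r = Σ_i u_i⊗v_i, and let M be an A-bimodule with actions ▷: A⊗M→M and ◁: M⊗A→M. Define φ: M→A⊗M by φ(m) = Σ_i u_i⊗(m◁v_i) and ψ: M→M⊗A by ψ(m) = Σ_i (v_i▷m)⊗u_i. Then (M, ▷, ◁, φ, ψ) is an anti-flexible Hopf bimodule over the anti-flexible bialgebra (A, ·, Δ_r). -/

import Mathlib

open TensorProduct LinearMap

namespace AntiFlexible

section Basic

variable (K : Type*) [Field K] [CharZero K]
variable (M N P : Type*)
variable [AddCommGroup M] [Module K M] [AddCommGroup N] [Module K N] [AddCommGroup P] [Module K P]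

/-- The flip map `τ : M ⊗ N → N ⊗ M`. -/
noncomputable def τ : M ⊗[K] N →ₗ[K] N ⊗[K] M := (TensorProduct.comm K M N).toLinearMap

/-- `τ₁₃ : (M ⊗ N) ⊗ P → (P ⊗ N) ⊗ M`, exchanging the outer tensor factors. -/
noncomputable def τ₁₃ : (M ⊗[K] N) ⊗[K] P →ₗ[K] (P ⊗[K] N) ⊗[K] M :=
  (TensorProduct.assoc K P N M).symm.toLinearMap ∘ₗ
    (lTensor P (τ K M N)) ∘ₗ (TensorProduct.comm K (M ⊗[K] N) P).toLinearMap

/-- The reassociator `M ⊗ (N ⊗ P) → (M ⊗ N) ⊗ P`. -/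
noncomputable def α : M ⊗[K] (N ⊗[K] P) →ₗ[K] (M ⊗[K] N) ⊗[K] P :=
  (TensorProduct.assoc K M N P).symm.toLinearMap

/-- The antisymmetrizer `id - τ` on `M ⊗ M`. -/
noncomputable def ω : M ⊗[K] M →ₗ[K] M ⊗[K] M := LinearMap.id - τ K M M

end Basic

section Structures

variable {K : Type*} [Field K] [CharZero K]
variable {A H V : Type*}
variable [AddCommGroup A] [Module K A] [AddCommGroup H] [Module K H]
variable [AddCommGroup V] [Module K V]

/-- Anti-flexible algebra: `(ab)c - a(bc) = (cb)a - c(ba)`. -/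
def IsAFAlgebra (m : A →ₗ[K] A →ₗ[K] A) : Prop :=
  ∀ a b c, m (m a b) c - m a (m b c) = m (m c b) a - m c (m b a)

/-- The coassociativity defect `(Δ ⊗ id)Δ - (id ⊗ Δ)Δ`, viewed in `(A ⊗ A) ⊗ A`. -/
noncomputable def coassocDefect (Δ : A →ₗ[K] A ⊗[K] A) : A →ₗ[K] (A ⊗[K] A) ⊗[K] A :=
  (rTensor A Δ) ∘ₗ Δ - (α K A A A) ∘ₗ (lTensor A Δ) ∘ₗ Δ

/-- Anti-flexible coalgebra: the coassociativity defect is `τ₁₃`-invariant. -/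
def IsAFCoalgebra (Δ : A →ₗ[K] A ⊗[K] A) : Prop :=
  ∀ a, coassocDefect Δ a = τ₁₃ K A A A (coassocDefect Δ a)

/-- Anti-flexible bialgebra. -/
def IsAFBialgebra (m : A →ₗ[K] A →ₗ[K] A) (Δ : A →ₗ[K] A ⊗[K] A) : Prop :=
  IsAFAlgebra m ∧ IsAFCoalgebra Δ ∧
  (∀ a b, Δ (m a b) + τ K A A (Δ (m b a)) =
      rTensor A (m b) (τ K A A (Δ a)) + lTensor A (m.flip a) (τ K A A (Δ b))
      + rTensor A (m.flip b) (Δ a) + lTensor A (m a) (Δ b)) ∧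
  (∀ a b, ω K A (lTensor A (m.flip b) (Δ a) - rTensor A (m b) (Δ a)
      - lTensor A (m.flip a) (Δ b) + rTensor A (m a) (Δ b)) = 0)

/-- `V` is a bimodule over the anti-flexible algebra `(H, m)` via `tr = ▷` and `tl = ◁`. -/
def IsAFBimodule (m : H →ₗ[K] H →ₗ[K] H)
    (tr : H →ₗ[K] V →ₗ[K] V) (tl : V →ₗ[K] H →ₗ[K] V) : Prop :=
  (∀ x y v, tr (m x y) v - tr x (tr y v) = tl (tl v y) x - tl v (m y x)) ∧
  (∀ x y v, tl (tr x v) y - tr x (tl v y) = tl (tr y v) x - tr y (tl v x))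

/-- `V` is a bicomodule over the anti-flexible coalgebra `(H, Δ)` via `φ` and `ψ`. -/
def IsAFBicomodule (Δ : H →ₗ[K] H ⊗[K] H)
    (φ : V →ₗ[K] H ⊗[K] V) (ψ : V →ₗ[K] V ⊗[K] H) : Prop :=
  (∀ v, rTensor V Δ (φ v) - α K H H V (lTensor H φ (φ v))
      = τ₁₃ K V H H (rTensor H ψ (ψ v) - α K V H H (lTensor V Δ (ψ v)))) ∧
  (∀ v, rTensor H φ (ψ v) - α K H V H (lTensor H ψ (φ v))
      = τ₁₃ K H V H (rTensor H φ (ψ v) - α K H V H (lTensor H ψ (φ v))))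

/-- Anti-flexible Hopf bimodule over `(H, m, Δ)`, with conditions (HM1)-(HM3). -/
def IsAFHopfBimodule (m : H →ₗ[K] H →ₗ[K] H) (Δ : H →ₗ[K] H ⊗[K] H)
    (tr : H →ₗ[K] V →ₗ[K] V) (tl : V →ₗ[K] H →ₗ[K] V)
    (φ : V →ₗ[K] H ⊗[K] V) (ψ : V →ₗ[K] V ⊗[K] H) : Prop :=
  IsAFBimodule m tr tl ∧ IsAFBicomodule Δ φ ψ ∧
  -- (HM1)
  (∀ x v, φ (tr x v) + τ K V H (ψ (tl v x))
      = lTensor H (tr x) (φ v) + lTensor H (tl.flip x) (τ K V H (ψ v))) ∧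
  -- (HM2)
  (∀ x v, ψ (tr x v) + τ K H V (φ (tl v x))
      = rTensor H (tr.flip v) (Δ x) + lTensor V (m x) (ψ v)
      + lTensor V (m.flip x) (τ K H V (φ v)) + rTensor H (tl v) (τ K H H (Δ x))) ∧
  -- (HM3)
  (∀ x v, rTensor H (tr x) (ψ v) - rTensor H (tl v) (Δ x) - lTensor V (m.flip x) (ψ v)
      = τ K H V (- lTensor H (tl.flip x) (φ v) + rTensor V (m x) (φ v)
        + lTensor H (tr.flip v) (Δ x)))

/-- `A` is a braided anti-flexible bialgebra over `(H, mH, ΔH)`: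
an anti-flexible algebra and coalgebra in the category of anti-flexible Hopf bimodules,
satisfying (BB1) and (BB2). -/
def IsBraidedAFBialgebra (mA : A →ₗ[K] A →ₗ[K] A) (ΔA : A →ₗ[K] A ⊗[K] A)
    (mH : H →ₗ[K] H →ₗ[K] H) (ΔH : H →ₗ[K] H ⊗[K] H)
    (tr : H →ₗ[K] A →ₗ[K] A) (tl : A →ₗ[K] H →ₗ[K] A)
    (φ : A →ₗ[K] H ⊗[K] A) (ψ : A →ₗ[K] A ⊗[K] H) : Prop :=
  IsAFAlgebra mA ∧ IsAFCoalgebra ΔA ∧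
  IsAFHopfBimodule mH ΔH tr tl φ ψ ∧
  -- H-bimodule algebra
  (∀ x a b, mA (tr x a) b - tr x (mA a b) = tl (mA b a) x - mA b (tl a x)) ∧
  (∀ x a b, mA a (tr x b) - mA (tl a x) b = mA b (tr x a) - mA (tl b x) a) ∧
  -- H-bimodule coalgebra
  (∀ x b, ΔA (tr x b) + τ K A A (ΔA (tl b x))
      = lTensor A (tl.flip x) (τ K A A (ΔA b)) + lTensor A (tr x) (ΔA b)) ∧
  (∀ x b, ω K A (rTensor A (tr x) (ΔA b) - lTensor A (tl.flip x) (ΔA b)) = 0) ∧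
  -- H-bicomodule algebra
  (∀ a b, φ (mA a b) + τ K A H (ψ (mA b a))
      = lTensor H (mA a) (φ b) + lTensor H (mA.flip a) (τ K A H (ψ b))) ∧
  (∀ a b, lTensor H (mA.flip b) (φ a) - lTensor H (mA.flip a) (φ b)
      = τ K A H (rTensor H (mA a) (ψ b) - rTensor H (mA b) (ψ a))) ∧
  -- H-bicomodule coalgebra
  (∀ a, rTensor A φ (ΔA a) - α K H A A (lTensor H ΔA (φ a))
      = τ₁₃ K A A H (rTensor H ΔA (ψ a) - α K A A H (lTensor A ψ (ΔA a)))) ∧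
  (∀ a, rTensor A ψ (ΔA a) - α K A H A (lTensor A φ (ΔA a))
      = τ₁₃ K A H A (rTensor A ψ (ΔA a) - α K A H A (lTensor A φ (ΔA a)))) ∧
  -- (BB1)
  (∀ a b, ΔA (mA a b) + τ K A A (ΔA (mA b a))
      = rTensor A (mA.flip b) (ΔA a) + rTensor A (mA b) (τ K A A (ΔA a))
      + lTensor A (mA a) (ΔA b) + lTensor A (mA.flip a) (τ K A A (ΔA b))
      + rTensor A (tr.flip b) (φ a) + rTensor A (tl b) (τ K A H (ψ a))
      + lTensor A (tl a) (ψ b) + lTensor A (tr.flip a) (τ K H A (φ b))) ∧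
  -- (BB2)
  (∀ a b, ω K A (lTensor A (mA.flip b) (ΔA a) - rTensor A (mA b) (ΔA a)
        - lTensor A (mA.flip a) (ΔA b) + rTensor A (mA a) (ΔA b))
      + ω K A (lTensor A (tr.flip b) (ψ a) - rTensor A (tl b) (φ a)
        - lTensor A (tr.flip a) (ψ b) + rTensor A (tl a) (φ b)) = 0)

/-- The (cocycle) cross product multiplication on `A × H`:
`(a,x)(b,y) = (ab + x⇀b + a↼y + σ(x,y), xy + x◁b + a▷y + θ(a,b))`,
where `tr = ⇀`, `tl = ↼`, `sr = ▷`, `sl = ◁`. -/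
noncomputable def prodMul (mA : A →ₗ[K] A →ₗ[K] A) (mH : H →ₗ[K] H →ₗ[K] H)
    (tr : H →ₗ[K] A →ₗ[K] A) (tl : A →ₗ[K] H →ₗ[K] A)
    (sr : A →ₗ[K] H →ₗ[K] H) (sl : H →ₗ[K] A →ₗ[K] H)
    (σ : H →ₗ[K] H →ₗ[K] A) (θ : A →ₗ[K] A →ₗ[K] H) :
    (A × H) →ₗ[K] (A × H) →ₗ[K] (A × H) :=
  ((mA ∘ₗ fst K A H).compl₂ (fst K A H) + (tr ∘ₗ snd K A H).compl₂ (fst K A H)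
    + (tl ∘ₗ fst K A H).compl₂ (snd K A H)
    + (σ ∘ₗ snd K A H).compl₂ (snd K A H)).compr₂ (inl K A H)
  + ((mH ∘ₗ snd K A H).compl₂ (snd K A H) + (sl ∘ₗ snd K A H).compl₂ (fst K A H)
    + (sr ∘ₗ fst K A H).compl₂ (snd K A H)
    + (θ ∘ₗ fst K A H).compl₂ (fst K A H)).compr₂ (inr K A H)

/-- The (cycle) cross coproduct comultiplication on `A × H`:
`Δ(a) = Δ_A(a) + φ(a) + ψ(a) + P(a)` and `Δ(x) = Δ_H(x) + ρ(x) + γ(x) + Q(x)`. -/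
noncomputable def prodComul (ΔA : A →ₗ[K] A ⊗[K] A) (ΔH : H →ₗ[K] H ⊗[K] H)
    (φ : A →ₗ[K] H ⊗[K] A) (ψ : A →ₗ[K] A ⊗[K] H)
    (ρ : H →ₗ[K] A ⊗[K] H) (γ : H →ₗ[K] H ⊗[K] A)
    (P : A →ₗ[K] H ⊗[K] H) (Q : H →ₗ[K] A ⊗[K] A) :
    (A × H) →ₗ[K] (A × H) ⊗[K] (A × H) :=
  (TensorProduct.map (inl K A H) (inl K A H)) ∘ₗ ΔA ∘ₗ fst K A H
  + (TensorProduct.map (inr K A H) (inl K A H)) ∘ₗ φ ∘ₗ fst K A H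
  + (TensorProduct.map (inl K A H) (inr K A H)) ∘ₗ ψ ∘ₗ fst K A H
  + (TensorProduct.map (inr K A H) (inr K A H)) ∘ₗ P ∘ₗ fst K A H
  + (TensorProduct.map (inr K A H) (inr K A H)) ∘ₗ ΔH ∘ₗ snd K A H
  + (TensorProduct.map (inl K A H) (inr K A H)) ∘ₗ ρ ∘ₗ snd K A H
  + (TensorProduct.map (inr K A H) (inl K A H)) ∘ₗ γ ∘ₗ snd K A H
  + (TensorProduct.map (inl K A H) (inl K A H)) ∘ₗ Q ∘ₗ snd K A H

/-- The linear map `(a, x) ↦ (a + r(x), s(x))` on `A × V`. -/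
noncomputable def phiRS (r : V →ₗ[K] A) (s : V →ₗ[K] V) : (A × V) →ₗ[K] (A × V) :=
  (fst K A V + r ∘ₗ snd K A V).prod (s ∘ₗ snd K A V)

end Structures

end AntiFlexible

open AntiFlexible

/-! Everything is checked termwise after expanding `r = ∑ i, u i ⊗ v i`. The conditions (HM1)–(HM3)
and the second bicomodule axiom are the bimodule axioms applied to each term, once skew-symmetry
of `r` has cancelled the terms in which `u i` and `v i` trade places. The first bicomodule axiom
is where the anti-flexible Yang–Baxter equation enters: together with skew-symmetry it identifies
`∑ i, Δ_r (u i) ⊗ v i` and `∑ i, τ (Δ_r (u i)) ⊗ v i` with `∑ i j, u i ⊗ u j ⊗ v i v j` and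
`∑ i j, u i ⊗ u j ⊗ v j v i`, after which that axiom is again the first bimodule axiom termwise. -/

namespace AntiFlexible

section Flips

variable {K M N P : Type*} [Field K]
variable [AddCommGroup M] [Module K M] [AddCommGroup N] [Module K N] [AddCommGroup P] [Module K P]

@[simp]
theorem τ_tmul (x : M) (y : N) : τ K M N (x ⊗ₜ y) = y ⊗ₜ x := rfl

@[simp]
theorem τ₁₃_tmul (x : M) (y : N) (z : P) : τ₁₃ K M N P ((x ⊗ₜ y) ⊗ₜ z) = (z ⊗ₜ y) ⊗ₜ x := rfl

@[simp]
theorem α_tmul (x : M) (y : N) (z : P) : α K M N P (x ⊗ₜ (y ⊗ₜ z)) = (x ⊗ₜ y) ⊗ₜ z := rfl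

theorem τ₁₃_α_tmul (x : M) (t : N ⊗[K] P) : τ₁₃ K M N P (α K M N P (x ⊗ₜ t)) = τ K N P t ⊗ₜ x := by
  induction t using TensorProduct.induction_on with
  | zero => simp
  | tmul y z => simp
  | add s t hs ht => simp only [tmul_add, map_add, hs, ht, add_tmul]

end Flips

section Quasitriangular

variable {K A W : Type*} [Field K] [AddCommGroup A] [Module K A] [AddCommGroup W] [Module K W]
variable {m : A →ₗ[K] A →ₗ[K] A} {n : ℕ} {u v : Fin n → A}

theorem sum_swap_of_skew (hskew : τ K A A (∑ i, u i ⊗ₜ[K] v i) = -∑ i, u i ⊗ₜ[K] v i)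
    (B : A →ₗ[K] A →ₗ[K] W) : ∑ i, B (v i) (u i) = -∑ i, B (u i) (v i) := by
  simpa [map_sum] using congrArg (TensorProduct.lift B) hskew

theorem sum_sum_swap_of_skew (hskew : τ K A A (∑ i, u i ⊗ₜ[K] v i) = -∑ i, u i ⊗ₜ[K] v i)
    {ι : Type*} (s : Finset ι) (B : ι → A →ₗ[K] A →ₗ[K] W) :
    ∑ k ∈ s, ∑ i, B k (v i) (u i) = -∑ k ∈ s, ∑ i, B k (u i) (v i) := by
  rw [← Finset.sum_neg_distrib]
  exact Finset.sum_congr rfl fun k _ => sum_swap_of_skew hskew (B k)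

theorem sum_tmul_swap_of_skew {X Y : Type*} [AddCommGroup X] [Module K X] [AddCommGroup Y]
    [Module K Y] (hskew : τ K A A (∑ i, u i ⊗ₜ[K] v i) = -∑ i, u i ⊗ₜ[K] v i)
    (f : A →ₗ[K] X) (g : A →ₗ[K] Y) :
    ∑ i, f (v i) ⊗ₜ[K] g (u i) = -∑ i, f (u i) ⊗ₜ[K] g (v i) :=
  sum_swap_of_skew hskew ((TensorProduct.mk K X Y ∘ₗ f).compl₂ g)

variable (m u v) in
def IsAFYBSolution : Prop :=
  ∑ i, ∑ j, ((m (u i) (u j)) ⊗ₜ[K] (v i)) ⊗ₜ[K] (v j)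
    - ∑ i, ∑ j, ((u j) ⊗ₜ[K] (m (u i) (v j))) ⊗ₜ[K] (v i)
    + ∑ i, ∑ j, ((u i) ⊗ₜ[K] (u j)) ⊗ₜ[K] (m (v i) (v j)) = 0

variable (m u v) in
/-- The comultiplication `Δ_r` for `r = ∑ i, u i ⊗ v i`. -/
noncomputable def rComul : A →ₗ[K] A ⊗[K] A :=
  ∑ i, ((TensorProduct.mk K A A (u i)) ∘ₗ (m.flip (v i))
    + ((TensorProduct.mk K A A).flip (u i)) ∘ₗ (m (v i)))

variable (m u v) in
@[simp]
theorem rComul_apply (a : A) :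
    rComul m u v a = ∑ i, (u i ⊗ₜ m a (v i) + m (v i) a ⊗ₜ u i) := by
  simp [rComul]

theorem sum_rComul_tmul (hskew : τ K A A (∑ i, u i ⊗ₜ[K] v i) = -∑ i, u i ⊗ₜ[K] v i)
    (hAFYB : IsAFYBSolution m u v) :
    ∑ i, rComul m u v (u i) ⊗ₜ v i = ∑ i, ∑ j, (u i ⊗ₜ[K] u j) ⊗ₜ[K] m (v i) (v j) := by
  unfold IsAFYBSolution at hAFYB
  have hswap := sum_sum_swap_of_skew hskew Finset.univ fun i =>
    (TensorProduct.mk K A A ∘ₗ m.flip (u i)).compr₂ ((TensorProduct.mk K (A ⊗[K] A) A).flip (v i))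
  simp only [compr₂_apply, coe_comp, Function.comp_apply, flip_apply, mk_apply] at hswap
  rw [Finset.sum_comm (f := fun i j => ((m (u j)) (u i) ⊗ₜ[K] v j) ⊗ₜ[K] v i)] at hswap
  simp only [rComul_apply, sum_tmul, add_tmul, Finset.sum_add_distrib]
  linear_combination (norm := module) hswap - hAFYB

theorem sum_τ_rComul_tmul (hskew : τ K A A (∑ i, u i ⊗ₜ[K] v i) = -∑ i, u i ⊗ₜ[K] v i)
    (hAFYB : IsAFYBSolution m u v) :
    ∑ i, τ K A A (rComul m u v (u i)) ⊗ₜ v i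
      = ∑ i, ∑ j, (u i ⊗ₜ[K] u j) ⊗ₜ[K] m (v j) (v i) := by
  unfold IsAFYBSolution at hAFYB
  have hAFYB' := congrArg (TensorProduct.rightComm K A A A) hAFYB
  simp only [map_add, map_sub, map_sum, rightComm_tmul, map_zero] at hAFYB'
  have hswap₁ := sum_sum_swap_of_skew hskew Finset.univ fun i =>
    (TensorProduct.mk K A A ∘ₗ m (u i)).compr₂ ((TensorProduct.mk K (A ⊗[K] A) A).flip (v i))
  have hswap₂ := sum_sum_swap_of_skew hskew Finset.univ fun j =>
    (TensorProduct.mk K (A ⊗[K] A) A ∘ₗ TensorProduct.mk K A A (u j) ∘ₗ m (v j)).flip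
  have hswap₃ := sum_sum_swap_of_skew hskew Finset.univ fun i =>
    (TensorProduct.mk K (A ⊗[K] A) A ∘ₗ TensorProduct.mk K A A (u i)).flip ∘ₗ m.flip (v i)
  simp only [compr₂_apply, coe_comp, Function.comp_apply, flip_apply, mk_apply]
    at hswap₁ hswap₂ hswap₃
  rw [Finset.sum_comm] at hswap₂
  rw [Finset.sum_comm (f := fun i j => (u i ⊗ₜ[K] v j) ⊗ₜ[K] m (u j) (v i))] at hswap₃
  simp only [rComul_apply, map_sum, map_add, τ_tmul, sum_tmul, add_tmul, Finset.sum_add_distrib]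
  linear_combination (norm := module) hswap₁ + hswap₂ - hswap₃ - hAFYB'

end Quasitriangular

section HopfBimodule

variable {K A M : Type*} [Field K] [AddCommGroup A] [Module K A] [AddCommGroup M] [Module K M]
variable {m : A →ₗ[K] A →ₗ[K] A} {n : ℕ} {u v : Fin n → A}
variable {tr : A →ₗ[K] M →ₗ[K] M} {tl : M →ₗ[K] A →ₗ[K] M}

variable (u v tl) in
noncomputable def rLeftCoaction : M →ₗ[K] A ⊗[K] M :=
  ∑ i, (TensorProduct.mk K A M (u i)) ∘ₗ (tl.flip (v i))

variable (u v tr) in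
noncomputable def rRightCoaction : M →ₗ[K] M ⊗[K] A :=
  ∑ i, ((TensorProduct.mk K M A).flip (u i)) ∘ₗ (tr (v i))

variable (u v tl) in
@[simp]
theorem rLeftCoaction_apply (w : M) : rLeftCoaction u v tl w = ∑ i, u i ⊗ₜ tl w (v i) := by
  simp [rLeftCoaction]

variable (u v tr) in
@[simp]
theorem rRightCoaction_apply (w : M) : rRightCoaction u v tr w = ∑ i, tr (v i) w ⊗ₜ u i := by
  simp [rRightCoaction]

theorem rCoaction_bicomodule_left (hskew : τ K A A (∑ i, u i ⊗ₜ[K] v i) = -∑ i, u i ⊗ₜ[K] v i)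
    (hAFYB : IsAFYBSolution m u v) (hbim : IsAFBimodule m tr tl) (w : M) :
    rTensor M (rComul m u v) (rLeftCoaction u v tl w)
        - α K A A M (lTensor A (rLeftCoaction u v tl) (rLeftCoaction u v tl w))
      = τ₁₃ K M A A (rTensor A (rRightCoaction u v tr) (rRightCoaction u v tr w)
        - α K M A A (lTensor M (rComul m u v) (rRightCoaction u v tr w))) := by
  have hΔφ : rTensor M (rComul m u v) (rLeftCoaction u v tl w)
      = lTensor (A ⊗[K] A) (tl w) (∑ i, rComul m u v (u i) ⊗ₜ v i) := by
    simp only [rLeftCoaction_apply, map_sum, rTensor_tmul, lTensor_tmul]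
  have hΔψ : τ₁₃ K M A A (α K M A A (lTensor M (rComul m u v) (rRightCoaction u v tr w)))
      = lTensor (A ⊗[K] A) (tr.flip w) (∑ i, τ K A A (rComul m u v (u i)) ⊗ₜ v i) := by
    simp only [rRightCoaction_apply, map_sum, lTensor_tmul, τ₁₃_α_tmul, flip_apply]
  rw [map_sub, hΔφ, hΔψ, sum_rComul_tmul hskew hAFYB, sum_τ_rComul_tmul hskew hAFYB]
  simp only [rLeftCoaction_apply, rRightCoaction_apply, map_sum, lTensor_tmul, rTensor_tmul,
    α_tmul, τ₁₃_tmul, flip_apply, sum_tmul, tmul_sum, ← Finset.sum_sub_distrib, ← tmul_sub]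
  refine Finset.sum_congr rfl fun i _ => Finset.sum_congr rfl fun j _ => congrArg _ ?_
  linear_combination (norm := module) hbim.1 (v j) (v i) w

theorem rCoaction_bicomodule_right (hbim : IsAFBimodule m tr tl) (w : M) :
    rTensor A (rLeftCoaction u v tl) (rRightCoaction u v tr w)
        - α K A M A (lTensor A (rRightCoaction u v tr) (rLeftCoaction u v tl w))
      = τ₁₃ K A M A (rTensor A (rLeftCoaction u v tl) (rRightCoaction u v tr w)
        - α K A M A (lTensor A (rRightCoaction u v tr) (rLeftCoaction u v tl w))) := by
  simp only [rLeftCoaction_apply, rRightCoaction_apply, map_sum, map_sub, lTensor_tmul,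
    rTensor_tmul, α_tmul, τ₁₃_tmul, sum_tmul, tmul_sum]
  rw [Finset.sum_comm (f := fun i j => (u i ⊗ₜ[K] tr (v j) (tl w (v i))) ⊗ₜ[K] u j),
    Finset.sum_comm (f := fun i j => (u i ⊗ₜ[K] tl (tr (v i) w) (v j)) ⊗ₜ[K] u j)]
  simp only [← Finset.sum_sub_distrib, ← sub_tmul, ← tmul_sub]
  refine Finset.sum_congr rfl fun i _ => Finset.sum_congr rfl fun j _ => ?_
  rw [hbim.2 (v i) (v j) w]

theorem rCoaction_hm1 (hbim : IsAFBimodule m tr tl) (x : A) (w : M) :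
    rLeftCoaction u v tl (tr x w) + τ K M A (rRightCoaction u v tr (tl w x))
      = lTensor A (tr x) (rLeftCoaction u v tl w)
        + lTensor A (tl.flip x) (τ K M A (rRightCoaction u v tr w)) := by
  simp only [rLeftCoaction_apply, rRightCoaction_apply, map_sum, lTensor_tmul, τ_tmul, flip_apply,
    ← Finset.sum_add_distrib, ← tmul_add]
  refine Finset.sum_congr rfl fun i _ => congrArg _ ?_
  linear_combination (norm := module) hbim.2 x (v i) w

theorem rCoaction_hm2 (hskew : τ K A A (∑ i, u i ⊗ₜ[K] v i) = -∑ i, u i ⊗ₜ[K] v i)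
    (hbim : IsAFBimodule m tr tl) (x : A) (w : M) :
    rRightCoaction u v tr (tr x w) + τ K A M (rLeftCoaction u v tl (tl w x))
      = rTensor A (tr.flip w) (rComul m u v x) + lTensor M (m x) (rRightCoaction u v tr w)
        + lTensor M (m.flip x) (τ K A M (rLeftCoaction u v tl w))
        + rTensor A (tl w) (τ K A A (rComul m u v x)) := by
  have h₁ := sum_tmul_swap_of_skew hskew (tr.flip w) (m x)
  have h₂ := sum_tmul_swap_of_skew hskew (tl w) (m.flip x)
  simp only [flip_apply] at h₁ h₂
  simp only [rLeftCoaction_apply, rRightCoaction_apply, rComul_apply, map_sum, map_add,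
    lTensor_tmul, rTensor_tmul, τ_tmul, flip_apply, Finset.sum_add_distrib]
  have hB1 : ∀ i, tr (v i) (tr x w) = tr (m (v i) x) w - tl (tl w x) (v i) + tl w (m x (v i)) :=
    fun i => by linear_combination (norm := module) -hbim.1 (v i) x w
  simp only [hB1, h₁, h₂, sub_tmul, add_tmul, Finset.sum_add_distrib, Finset.sum_sub_distrib]
  abel

theorem rCoaction_hm3 (hskew : τ K A A (∑ i, u i ⊗ₜ[K] v i) = -∑ i, u i ⊗ₜ[K] v i)
    (hbim : IsAFBimodule m tr tl) (x : A) (w : M) :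
    rTensor A (tr x) (rRightCoaction u v tr w) - rTensor A (tl w) (rComul m u v x)
        - lTensor M (m.flip x) (rRightCoaction u v tr w)
      = τ K A M (-lTensor A (tl.flip x) (rLeftCoaction u v tl w)
        + rTensor M (m x) (rLeftCoaction u v tl w) + lTensor A (tr.flip w) (rComul m u v x)) := by
  have h₁ := sum_tmul_swap_of_skew hskew (tl w) (m x)
  have h₂ := sum_tmul_swap_of_skew hskew (tr.flip w) (m.flip x)
  simp only [flip_apply] at h₁ h₂
  simp only [rLeftCoaction_apply, rRightCoaction_apply, rComul_apply, map_sum, map_add, map_neg,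
    lTensor_tmul, rTensor_tmul, τ_tmul, flip_apply, Finset.sum_add_distrib]
  have hB1 : ∀ i, tr x (tr (v i) w) = tr (m x (v i)) w - tl (tl w (v i)) x + tl w (m (v i) x) :=
    fun i => by linear_combination (norm := module) -hbim.1 x (v i) w
  simp only [hB1, h₁, h₂, sub_tmul, add_tmul, Finset.sum_add_distrib, Finset.sum_sub_distrib]
  abel

end HopfBimodule

end AntiFlexible

theorem quasitriangular_hopf_bimodule
    (K A M : Type*) [Field K]
    [AddCommGroup A] [Module K A] [AddCommGroup M] [Module K M]
    (m : A →ₗ[K] A →ₗ[K] A) (n : ℕ) (u v : Fin n → A)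
    (tr : A →ₗ[K] M →ₗ[K] M) (tl : M →ₗ[K] A →ₗ[K] M)
    (hskew : τ K A A (∑ i, u i ⊗ₜ[K] v i) = - ∑ i, u i ⊗ₜ[K] v i)
    (hAFYB : ∑ i, ∑ j, ((m (u i) (u j)) ⊗ₜ[K] (v i)) ⊗ₜ[K] (v j)
      - ∑ i, ∑ j, ((u j) ⊗ₜ[K] (m (u i) (v j))) ⊗ₜ[K] (v i)
      + ∑ i, ∑ j, ((u i) ⊗ₜ[K] (u j)) ⊗ₜ[K] (m (v i) (v j)) = 0)
    (hbim : IsAFBimodule m tr tl) :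
    IsAFHopfBimodule m
      (∑ i, ((TensorProduct.mk K A A (u i)) ∘ₗ (m.flip (v i))
        + ((TensorProduct.mk K A A).flip (u i)) ∘ₗ (m (v i))))
      tr tl
      (∑ i, (TensorProduct.mk K A M (u i)) ∘ₗ (tl.flip (v i)))
      (∑ i, ((TensorProduct.mk K M A).flip (u i)) ∘ₗ (tr (v i))) :=
  ⟨hbim, ⟨rCoaction_bicomodule_left hskew hAFYB hbim, rCoaction_bicomodule_right hbim⟩,
    rCoaction_hm1 hbim, rCoaction_hm2 hskew hbim, rCoaction_hm3 hskew hbim⟩
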